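/- arXiv:1411.6860 — 2 statements merged into one kernel-verified Lean document; each statement's English description precedes it below -/
import Mathlib

section
/- Let η_i = π^{2q}(i−q)^{2q}/n for i = q+1,…, and let q > 1/2, l ∈ ℕ with l > 1/(2q), m ∈ ℕ ∪ {0}. Then as λ → 0, λ^{1/(2q)} · Σ_{i=q+1}^∞ (λ n η_i)^m / (1 + λ n η_i)^{m+l} → κ_q(m,l), where κ_q(m,l) = Γ(m+1/(2q)) Γ(l−1/(2q)) / (2πq Γ(l+m)). -/
/-!
Put `p = 2q`, `f x = (x ^ p) ^ m / (1 + x ^ p) ^ (m + l)` and `t = π λ^{1/p}`. Then the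
left-hand side is `π⁻¹ t ∑_{n ≥ 1} f (n t)`, a right-endpoint Riemann sum for `π⁻¹ ∫₀^∞ f`.
Since `f x ≤ max x 1 ^ (-p l)`, a decreasing majorant that is integrable exactly when `p l > 1`,
dominated convergence applied to the step functions `x ↦ f (t ⌈x / t⌉)` makes the sums converge
to the integral. The substitutions `u = x ^ p` and `s = u / (1 + u)` turn `∫₀^∞ f` into the Beta
integral `B(m + 1/p, l - 1/p) / p`.
-/

open Filter Real MeasureTheory Set Topology Function

section RiemannSum

variable {E : Type*} [NormedAddCommGroup E] [NormedSpace ℝ E] [CompleteSpace E]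

lemma le_mul_ceil_div {t : ℝ} (ht : 0 < t) (x : ℝ) : x ≤ t * ⌈x / t⌉ := by
  rw [← div_le_iff₀' ht]
  exact Int.le_ceil _

lemma mul_ceil_div_lt {t : ℝ} (ht : 0 < t) (x : ℝ) : t * ⌈x / t⌉ < x + t := by
  rw [← lt_div_iff₀' ht, add_div, div_self ht.ne']
  exact Int.ceil_lt_add_one _

lemma tendsto_mul_ceil_div (x : ℝ) :
    Tendsto (fun t : ℝ => t * ⌈x / t⌉) (𝓝[>] 0) (𝓝 x) := by
  have hupper : Tendsto (fun t : ℝ => x + t) (𝓝[>] 0) (𝓝 x) := by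
    simpa using ((continuous_const_add x).tendsto 0).mono_left nhdsWithin_le_nhds
  refine tendsto_of_tendsto_of_tendsto_of_le_of_le' tendsto_const_nhds hupper ?_ ?_ <;>
    filter_upwards [self_mem_nhdsWithin] with t ht
  exacts [le_mul_ceil_div ht x, (mul_ceil_div_lt ht x).le]

lemma integral_Ioi_comp_ceil_div {t : ℝ} (ht : 0 < t) {g : ℤ → E}
    (hg : IntegrableOn (fun x => g ⌈x / t⌉) (Ioi 0)) :
    ∫ x in Ioi 0, g ⌈x / t⌉ = t • ∑' n : ℕ, g (n + 1) := by
  set piece : ℕ → Set ℝ := fun n => (fun x => ⌈x / t⌉) ⁻¹' {(n : ℤ) + 1}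
  have hpiece : ∀ n : ℕ, piece n = Ioc (n * t) ((n + 1) * t) := by
    intro n
    ext x
    simp [piece, Int.ceil_eq_iff, lt_div_iff₀ ht, div_le_iff₀ ht]
  have hunion : Ioi (0 : ℝ) = ⋃ n, piece n := by
    ext x
    simp only [piece, mem_Ioi, mem_iUnion, mem_preimage, mem_singleton_iff]
    rw [← div_pos_iff_of_pos_right ht, ← Int.ceil_pos]
    refine ⟨fun h => ⟨(⌈x / t⌉ - 1).toNat, by omega⟩, ?_⟩
    rintro ⟨n, hn⟩
    omega
  have hdisj : Pairwise (Disjoint on piece) := fun i j hij =>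
    (disjoint_singleton.2 (by simpa using hij)).preimage _
  have hconst : ∀ n : ℕ, ∫ x in piece n, g ⌈x / t⌉ = t • g (n + 1) := by
    intro n
    have hg_eq : EqOn (fun x => g ⌈x / t⌉) (fun _ => g (n + 1)) (piece n) :=
      fun x hx => congrArg g hx
    rw [setIntegral_congr_fun (hpiece n ▸ measurableSet_Ioc) hg_eq, setIntegral_const, hpiece n,
      measureReal_def, volume_Ioc, show ((n : ℝ) + 1) * t - n * t = t by ring,
      ENNReal.toReal_ofReal ht.le]
  rw [hunion] at hg ⊢
  rw [integral_iUnion (fun n => hpiece n ▸ measurableSet_Ioc) hdisj hg]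
  simp_rw [hconst]
  rw [tsum_const_smul'']

theorem tendsto_smul_tsum_succ_mul_integral_Ioi {f : ℝ → E} {g : ℝ → ℝ}
    (hf : ContinuousOn f (Ioi 0)) (hg : IntegrableOn g (Ioi 0)) (hg_anti : AntitoneOn g (Ioi 0))
    (hfg : ∀ x ∈ Ioi 0, ‖f x‖ ≤ g x) :
    Tendsto (fun t => t • ∑' n : ℕ, f ((n + 1) * t)) (𝓝[>] 0) (𝓝 (∫ x in Ioi 0, f x)) := by
  set F : ℝ → ℝ → E := fun t x => f (t * ⌈x / t⌉)
  have hF_meas : ∀ t, AEStronglyMeasurable (F t) (volume.restrict (Ioi 0)) := fun t =>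
    ((StronglyMeasurable.of_discrete (f := fun k : ℤ => f (t * k))).comp_measurable
      (measurable_id.div_const t).ceil).aestronglyMeasurable
  have hF_bound : ∀ t > 0, ∀ x ∈ Ioi 0, ‖F t x‖ ≤ g x := fun t ht x hx =>
    have hxy := le_mul_ceil_div ht x
    (hfg _ (lt_of_lt_of_le hx hxy)).trans (hg_anti hx (lt_of_lt_of_le hx hxy) hxy)
  have hF_lim : Tendsto (fun t => ∫ x in Ioi 0, F t x) (𝓝[>] 0) (𝓝 (∫ x in Ioi 0, f x)) := by
    refine tendsto_integral_filter_of_dominated_convergence g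
      (Eventually.of_forall hF_meas) ?_ hg ?_
    · filter_upwards [self_mem_nhdsWithin] with t ht
      exact (ae_restrict_iff' measurableSet_Ioi).2 (Eventually.of_forall (hF_bound t ht))
    · refine (ae_restrict_iff' measurableSet_Ioi).2 (Eventually.of_forall fun x hx => ?_)
      exact ((hf.continuousAt (Ioi_mem_nhds hx)).tendsto).comp (tendsto_mul_ceil_div x)
  refine hF_lim.congr' ?_
  filter_upwards [self_mem_nhdsWithin] with t ht
  have hF_int : IntegrableOn (F t) (Ioi 0) :=
    hg.mono' (hF_meas t) ((ae_restrict_iff' measurableSet_Ioi).2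
      (Eventually.of_forall (hF_bound t ht)))
  rw [integral_Ioi_comp_ceil_div ht (g := fun k : ℤ => f (t * k)) hF_int]
  simp only [Int.cast_add, Int.cast_natCast, Int.cast_one, mul_comm t]

end RiemannSum

theorem integral_Ioo_rpow_mul_one_sub_rpow {a b : ℝ} (ha : 0 < a) (hb : 0 < b) :
    ∫ x in Ioo (0 : ℝ) 1, x ^ (a - 1) * (1 - x) ^ (b - 1) =
      Gamma a * Gamma b / Gamma (a + b) := by
  have hbeta := Complex.betaIntegral_eq_Gamma_mul_div a b (by simpa) (by simpa)
  rw [← Complex.ofReal_add, Complex.Gamma_ofReal, Complex.Gamma_ofReal, Complex.Gamma_ofReal,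
    Complex.betaIntegral, intervalIntegral.integral_of_le zero_le_one] at hbeta
  have hreal : ∫ x in Ioc (0 : ℝ) 1, (x : ℂ) ^ ((a : ℂ) - 1) * (1 - (x : ℂ)) ^ ((b : ℂ) - 1) =
      ((∫ x in Ioc (0 : ℝ) 1, x ^ (a - 1) * (1 - x) ^ (b - 1) : ℝ) : ℂ) := by
    rw [← integral_complex_ofReal]
    refine setIntegral_congr_fun measurableSet_Ioc fun x hx => ?_
    push_cast [Complex.ofReal_cpow hx.1.le, Complex.ofReal_cpow (sub_nonneg.2 hx.2)]
    rfl
  rw [← integral_Ioc_eq_integral_Ioo]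
  exact_mod_cast hreal ▸ hbeta

theorem integral_Ioi_rpow_div_one_add_rpow {a b : ℝ} (ha : 0 < a) (hb : 0 < b) :
    ∫ u in Ioi (0 : ℝ), u ^ (a - 1) / (1 + u) ^ (a + b) =
      Gamma a * Gamma b / Gamma (a + b) := by
  have himage : (fun u : ℝ => u / (1 + u)) '' Ioi 0 = Ioo 0 1 := by
    ext x
    simp only [mem_image, mem_Ioi, mem_Ioo]
    constructor
    · rintro ⟨u, hu, rfl⟩
      exact ⟨by positivity, (div_lt_one (by positivity)).2 (by linarith)⟩
    · rintro ⟨hx0, hx1⟩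
      refine ⟨x / (1 - x), div_pos hx0 (by linarith), ?_⟩
      field_simp
      ring
  have hinj : InjOn (fun u : ℝ => u / (1 + u)) (Ioi 0) := by
    intro u (hu : 0 < u) v (hv : 0 < v) huv
    field_simp at huv
    linarith
  have hderiv : ∀ u ∈ Ioi (0 : ℝ),
      HasDerivWithinAt (fun u : ℝ => u / (1 + u)) (((1 + u) ^ 2)⁻¹) (Ioi 0) u := by
    intro u (hu : 0 < u)
    have h := (hasDerivAt_id' u).div ((hasDerivAt_id' u).const_add 1) (by positivity)
    rw [show (1 * (1 + u) - u * 1) / (1 + u) ^ 2 = ((1 + u) ^ 2)⁻¹ by ring] at h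
    exact h.hasDerivWithinAt
  rw [← integral_Ioo_rpow_mul_one_sub_rpow ha hb, ← himage,
    integral_image_eq_integral_abs_deriv_smul measurableSet_Ioi hderiv hinj]
  refine setIntegral_congr_fun measurableSet_Ioi fun u (hu : 0 < u) => ?_
  have h1u : 0 < 1 + u := by linarith
  have hsub : 1 - u / (1 + u) = (1 + u)⁻¹ := by field_simp; ring
  have hsplit : (1 + u) ^ (a + b) = (1 + u) ^ (a - 1) * (1 + u) ^ (b - 1) * (1 + u) ^ 2 := by
    rw [← rpow_add h1u, ← rpow_natCast, ← rpow_add h1u]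
    ring_nf
  rw [hsub, smul_eq_mul, abs_of_pos (by positivity), div_rpow hu.le h1u.le, inv_rpow h1u.le,
    hsplit]
  field_simp

lemma integrableOn_Ioi_max_one_rpow_neg {c : ℝ} (hc : 1 < c) :
    IntegrableOn (fun x : ℝ => max x 1 ^ (-c)) (Ioi 0) := by
  rw [← Ioc_union_Ioi_eq_Ioi zero_le_one]
  refine IntegrableOn.union ?_ ?_
  · refine (ContinuousOn.integrableOn_Icc ?_).mono_set Ioc_subset_Icc_self
    exact ((continuous_id.max continuous_const).rpow_const
      fun _ => Or.inl (by positivity)).continuousOn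
  · refine (integrableOn_Ioi_rpow_of_lt (show -c < -1 by linarith) one_pos).congr_fun
      (fun x hx => ?_) measurableSet_Ioi
    rw [max_eq_left (mem_Ioi.1 hx).le]

lemma antitone_max_one_rpow_neg {c : ℝ} (hc : 0 ≤ c) : Antitone fun x : ℝ => max x 1 ^ (-c) :=
  fun _ _ hxy => rpow_le_rpow_of_nonpos (by positivity) (max_le_max hxy le_rfl) (by linarith)

section Kernel

variable {p : ℝ} (m l : ℕ)

lemma rpow_pow_div_one_add_rpow_pow_le {x : ℝ} (hx : 0 ≤ x) :
    (x ^ p) ^ m / (1 + x ^ p) ^ (m + l) ≤ max x 1 ^ (-(p * l)) := by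
  have hu : 0 ≤ x ^ p := rpow_nonneg hx p
  have hmax : max x 1 ^ p ≤ 1 + x ^ p := by
    rcases le_total x 1 with h | h
    · rw [max_eq_right h, one_rpow]; linarith
    · rw [max_eq_left h]; linarith
  calc (x ^ p) ^ m / (1 + x ^ p) ^ (m + l)
      ≤ (1 + x ^ p) ^ m / (1 + x ^ p) ^ (m + l) := by gcongr; linarith
    _ = ((1 + x ^ p) ^ l)⁻¹ := by rw [pow_add, div_mul_cancel_left₀ (by positivity)]
    _ ≤ ((max x 1 ^ p) ^ l)⁻¹ := by gcongr
    _ = max x 1 ^ (-(p * l)) := by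
      rw [rpow_neg (by positivity), rpow_mul (by positivity), rpow_natCast]

theorem integral_Ioi_rpow_pow_div_one_add_rpow_pow (hp : 0 < p) (hl : 1 / p < l) :
    ∫ x in Ioi (0 : ℝ), (x ^ p) ^ m / (1 + x ^ p) ^ (m + l) =
      Gamma (m + 1 / p) * Gamma (l - 1 / p) / (p * Gamma (m + l)) := by
  set a : ℝ := m + 1 / p
  set b : ℝ := l - 1 / p
  have hab : a + b = m + l := by ring
  have hsubst := integral_comp_rpow_Ioi (fun u => u ^ (a - 1) / (1 + u) ^ (a + b)) hp.ne'
  have hintegrand :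
      EqOn (fun x : ℝ => (|p| * x ^ (p - 1)) • ((x ^ p) ^ (a - 1) / (1 + x ^ p) ^ (a + b)))
      (fun x => p * ((x ^ p) ^ m / (1 + x ^ p) ^ (m + l))) (Ioi 0) := by
    intro x (hx : 0 < x)
    have hpow : x ^ (p - 1) * (x ^ p) ^ (a - 1) = (x ^ p) ^ m := by
      rw [← rpow_mul hx.le, ← rpow_add hx, ← rpow_natCast, ← rpow_mul hx.le]
      congr 1
      simp only [a]
      field_simp
      ring
    dsimp only
    rw [smul_eq_mul, abs_of_pos hp, hab, ← rpow_natCast (1 + x ^ p), mul_assoc, ← mul_div_assoc,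
      hpow]
    push_cast
    ring
  rw [setIntegral_congr_fun measurableSet_Ioi hintegrand, integral_const_mul,
    integral_Ioi_rpow_div_one_add_rpow (by positivity) (by linarith), hab] at hsubst
  rw [mul_comm p, ← div_div, ← hsubst, mul_div_cancel_left₀ _ hp.ne']

theorem tendsto_mul_tsum_rpow_pow_div_one_add_rpow_pow (hp : 0 < p) (hl : 1 / p < l) :
    Tendsto
      (fun t : ℝ => t * ∑' n : ℕ, ((((n : ℝ) + 1) * t) ^ p) ^ m / (1 + ((n + 1) * t) ^ p) ^ (m + l))
      (𝓝[>] 0) (𝓝 (Gamma (m + 1 / p) * Gamma (l - 1 / p) / (p * Gamma (m + l)))) := by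
  have hpl : 1 < p * l := by rwa [div_lt_iff₀ hp, mul_comm] at hl
  have hcont : ContinuousOn (fun x : ℝ => (x ^ p) ^ m / (1 + x ^ p) ^ (m + l)) (Ioi 0) := by
    have hxp : ContinuousOn (fun x : ℝ => x ^ p) (Ioi 0) :=
      (continuous_rpow_const hp.le).continuousOn
    exact (hxp.pow m).div ((continuousOn_const.add hxp).pow (m + l))
      fun x (hx : 0 < x) => by positivity
  have hdom : ∀ x ∈ Ioi (0 : ℝ), ‖(x ^ p) ^ m / (1 + x ^ p) ^ (m + l)‖ ≤ max x 1 ^ (-(p * l)) :=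
    fun x (hx : 0 < x) =>
      (norm_of_nonneg (by positivity)).trans_le (rpow_pow_div_one_add_rpow_pow_le m l hx.le)
  have hanti : AntitoneOn (fun x : ℝ => max x 1 ^ (-(p * l))) (Ioi 0) :=
    (antitone_max_one_rpow_neg (by positivity)).antitoneOn _
  simpa only [integral_Ioi_rpow_pow_div_one_add_rpow_pow m l hp hl, smul_eq_mul] using
    tendsto_smul_tsum_succ_mul_integral_Ioi hcont (integrableOn_Ioi_max_one_rpow_neg hpl) hanti hdom

end Kernel

lemma tendsto_const_mul_rpow_nhdsGT_zero {c r : ℝ} (hc : 0 < c) (hr : 0 < r) :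
    Tendsto (fun x : ℝ => c * x ^ r) (𝓝[>] 0) (𝓝[>] 0) := by
  refine tendsto_nhdsWithin_iff.2 ⟨?_, ?_⟩
  · have h := ((continuous_rpow_const hr.le).tendsto 0).const_mul c
    rw [zero_rpow hr.ne', mul_zero] at h
    exact h.mono_left nhdsWithin_le_nhds
  · filter_upwards [self_mem_nhdsWithin] with x (hx : 0 < x)
    exact mul_pos hc (rpow_pos_of_pos hx r)

theorem riemann_sum_to_kappa_general (q : ℝ) (hq : 1/2 < q) (m : ℕ) (l : ℕ)
    (hl' : 1/(2*q) < (l:ℝ)) :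
    Filter.Tendsto
      (fun lam : ℝ => lam ^ (1/(2*q)) *
        ∑' j : ℕ, (lam * Real.pi ^ (2*q) * ((j:ℝ)+1) ^ (2*q)) ^ m /
          (1 + lam * Real.pi ^ (2*q) * ((j:ℝ)+1) ^ (2*q)) ^ (m + l))
      (nhdsWithin 0 (Set.Ioi 0))
      (nhds (Real.Gamma ((m:ℝ) + 1/(2*q)) * Real.Gamma ((l:ℝ) - 1/(2*q)) /
        (2 * Real.pi * q * Real.Gamma ((l:ℝ) + (m:ℝ))))) := by
  have hp : 0 < 2 * q := by linarith
  have hlim := ((tendsto_mul_tsum_rpow_pow_div_one_add_rpow_pow m l hp hl').comp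
    (tendsto_const_mul_rpow_nhdsGT_zero pi_pos (one_div_pos.2 hp))).const_mul π⁻¹
  have hkappa : π⁻¹ * (Gamma (m + 1 / (2 * q)) * Gamma (l - 1 / (2 * q)) /
      (2 * q * Gamma (m + l))) =
      Gamma (m + 1 / (2 * q)) * Gamma (l - 1 / (2 * q)) / (2 * π * q * Gamma (l + m)) := by
    rw [add_comm (m : ℝ) l]
    field_simp
  rw [hkappa] at hlim
  refine hlim.congr' ?_
  filter_upwards [self_mem_nhdsWithin] with lam (hlam : 0 < lam)
  have hterm : ∀ j : ℕ, ((j + 1) * (π * lam ^ (1 / (2 * q)))) ^ (2 * q) =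
      lam * π ^ (2 * q) * (j + 1) ^ (2 * q) := by
    intro j
    rw [mul_rpow (by positivity) (by positivity), mul_rpow pi_pos.le (by positivity),
      ← rpow_mul hlam.le, one_div_mul_cancel hp.ne', rpow_one]
    ring
  simp only [Function.comp_apply, hterm]
  field_simp

theorem riemann_sum_to_kappa (q : ℝ) (hq : 1/2 < q) (m : ℕ) (l : ℕ) (hl : 1 ≤ l)
    (hl' : 1/(2*q) < (l:ℝ)) :
    Filter.Tendsto
      (fun lam : ℝ => lam ^ (1/(2*q)) *
        ∑' j : ℕ, (lam * Real.pi ^ (2*q) * ((j:ℝ)+1) ^ (2*q)) ^ m /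
          (1 + lam * Real.pi ^ (2*q) * ((j:ℝ)+1) ^ (2*q)) ^ (m + l))
      (nhdsWithin 0 (Set.Ioi 0))
      (nhds (Real.Gamma ((m:ℝ) + 1/(2*q)) * Real.Gamma ((l:ℝ) - 1/(2*q)) /
        (2 * Real.pi * q * Real.Gamma ((l:ℝ) + (m:ℝ))))) :=
  riemann_sum_to_kappa_general q hq m l hl'
end

section
/- Let n ≥ 1, let η₁,…,η_n ≥ 0, λ > 0, and let x₁,…,x_n be real numbers. Define T(λ) = (1/n) Σ_i x_i² λ n η_i/(1+λ n η_i)² − (1/n²) (Σ_i x_i² λ n η_i/(1+λ n η_i)) (Σ_i 1/(1+λ n η_i)). Then T(λ) = −(2λ/n²) (Σ_i x_i² λ n η_i/(1+λ n η_i)) · d/dλ [ −(n/2) log(Σ_i x_i² λnη_i/(1+λnη_i)) + (1/2) Σ_i log(λnη_i/(1+λnη_i)) ], provided all η_i > 0 and Σ_i x_i² λnη_i/(1+λnη_i) > 0. -/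
/-! With `a = n η`, `S(μ) = ∑ xᵢ² μaᵢ/(1 + μaᵢ)` and `d/dμ log (μa/(1 + μa)) = 1/(μ(1 + μa))`, the score is
`ℓ'(μ) = -(n/2) S'(μ)/S(μ) + (1/2) ∑ 1/(μ(1 + μaᵢ))`. Multiplying by `-2μS(μ)/n²` and using
`μ S'(μ) = ∑ xᵢ² μaᵢ/(1 + μaᵢ)²` gives exactly `T(μ)`. -/

open Real Finset

variable {ι : Type*} [Fintype ι]

theorem hasDerivAt_mul_div_one_add_mul {𝕜 : Type*} [NontriviallyNormedField 𝕜] (a μ : 𝕜)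
    (h : 1 + μ * a ≠ 0) :
    HasDerivAt (fun t => t * a / (1 + t * a)) (a / (1 + μ * a) ^ 2) μ := by
  have hlin : HasDerivAt (fun t => t * a) a μ := by simpa using (hasDerivAt_id μ).mul_const a
  exact (hlin.fun_div (hlin.const_add 1) h).congr_deriv (by ring)

theorem hasDerivAt_log_mul_div_one_add_mul (a μ : ℝ) (hμa : μ * a ≠ 0) (h : 1 + μ * a ≠ 0) :
    HasDerivAt (fun t => log (t * a / (1 + t * a))) (1 / (μ * (1 + μ * a))) μ := by
  convert (hasDerivAt_mul_div_one_add_mul a μ h).log (div_ne_zero hμa h) using 1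
  have ha : a ≠ 0 := right_ne_zero_of_mul hμa
  field_simp

noncomputable def shrinkageSum (w a : ι → ℝ) (μ : ℝ) : ℝ := ∑ i, w i * (μ * a i) / (1 + μ * a i)

noncomputable def marginalLogLik (c : ℝ) (w a : ι → ℝ) (μ : ℝ) : ℝ :=
  -(c / 2) * log (shrinkageSum w a μ) + (1 / 2) * ∑ i, log (μ * a i / (1 + μ * a i))

theorem hasDerivAt_shrinkageSum (w a : ι → ℝ) (μ : ℝ) (h : ∀ i, 1 + μ * a i ≠ 0) :
    HasDerivAt (shrinkageSum w a) (∑ i, w i * a i / (1 + μ * a i) ^ 2) μ := by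
  unfold shrinkageSum
  refine HasDerivAt.fun_sum fun i _ => ?_
  simpa only [mul_div_assoc] using (hasDerivAt_mul_div_one_add_mul (a i) μ (h i)).const_mul (w i)

theorem hasDerivAt_marginalLogLik (c : ℝ) (w a : ι → ℝ) {μ : ℝ} (hμa : ∀ i, μ * a i ≠ 0)
    (h1 : ∀ i, 1 + μ * a i ≠ 0) (hS : shrinkageSum w a μ ≠ 0) :
    HasDerivAt (marginalLogLik c w a)
      (-(c / 2) * ((∑ i, w i * a i / (1 + μ * a i) ^ 2) / shrinkageSum w a μ) +
        (1 / 2) * ∑ i, 1 / (μ * (1 + μ * a i))) μ :=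
  (((hasDerivAt_shrinkageSum w a μ h1).log hS).const_mul _).add
    ((HasDerivAt.fun_sum fun i _ => hasDerivAt_log_mul_div_one_add_mul (a i) μ (hμa i) (h1 i)).const_mul _)

theorem neg_mul_shrinkageSum_mul_deriv_marginalLogLik (c : ℝ) (w a : ι → ℝ) {μ : ℝ} (hμ : 0 < μ)
    (ha : ∀ i, 0 < a i) (hS : shrinkageSum w a μ ≠ 0) :
    -(2 * μ / c ^ 2) * shrinkageSum w a μ * deriv (marginalLogLik c w a) μ =
      (1 / c) * ∑ i, w i * (μ * a i) / (1 + μ * a i) ^ 2 -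
        (1 / c ^ 2) * shrinkageSum w a μ * ∑ i, 1 / (1 + μ * a i) := by
  have h1 : ∀ i, 1 + μ * a i ≠ 0 := fun i => by have := ha i; positivity
  have hμa : ∀ i, μ * a i ≠ 0 := fun i => by have := ha i; positivity
  rw [(hasDerivAt_marginalLogLik c w a hμa h1 hS).deriv]
  have e1 : ∑ i, w i * (μ * a i) / (1 + μ * a i) ^ 2 = μ * ∑ i, w i * a i / (1 + μ * a i) ^ 2 := by
    rw [mul_sum]; exact sum_congr rfl fun i _ => by ring
  have e2 : ∑ i, 1 / (μ * (1 + μ * a i)) = μ⁻¹ * ∑ i, 1 / (1 + μ * a i) := by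
    rw [mul_sum]; exact sum_congr rfl fun i _ => by rw [one_div, one_div, mul_inv]
  rw [e1, e2]
  field_simp
  ring

theorem estimating_equation_is_scaled_score_general (n : ℕ)
    (η : Fin n → ℝ) (hη : ∀ i, 0 < η i) (x : Fin n → ℝ)
    (ℓ : ℝ → ℝ)
    (hℓ : ∀ lam : ℝ, ℓ lam =
      -((n:ℝ)/2) * Real.log (∑ i, x i ^ 2 * (lam * (n:ℝ) * η i) / (1 + lam * (n:ℝ) * η i)) +
      (1/2) * ∑ i, Real.log ((lam * (n:ℝ) * η i) / (1 + lam * (n:ℝ) * η i)))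
    (T : ℝ → ℝ)
    (hT : ∀ lam : ℝ, T lam =
      (1/(n:ℝ)) * ∑ i, x i ^ 2 * (lam * (n:ℝ) * η i) / (1 + lam * (n:ℝ) * η i) ^ 2 -
      (1/(n:ℝ)^2) * (∑ i, x i ^ 2 * (lam * (n:ℝ) * η i) / (1 + lam * (n:ℝ) * η i)) *
        (∑ i, 1 / (1 + lam * (n:ℝ) * η i)))
    (lam : ℝ) (hlam : 0 < lam)
    (hpos : 0 < ∑ i, x i ^ 2 * (lam * (n:ℝ) * η i) / (1 + lam * (n:ℝ) * η i)) :
    T lam = -(2 * lam / (n:ℝ)^2) *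
      (∑ i, x i ^ 2 * (lam * (n:ℝ) * η i) / (1 + lam * (n:ℝ) * η i)) * deriv ℓ lam := by
  have ha : ∀ i, 0 < (n : ℝ) * η i := fun i => mul_pos (Nat.cast_pos.mpr i.pos) (hη i)
  have hS : ∀ μ : ℝ, ∑ i, x i ^ 2 * (μ * n * η i) / (1 + μ * n * η i) =
      shrinkageSum (fun i => x i ^ 2) (fun i => n * η i) μ := fun μ => by
    simp only [shrinkageSum, mul_assoc]
  have hℓ' : ℓ = marginalLogLik n (fun i => x i ^ 2) (fun i => n * η i) := funext fun μ => by
    rw [hℓ, hS]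
    simp only [marginalLogLik, mul_assoc]
  rw [hT, hℓ', hS, neg_mul_shrinkageSum_mul_deriv_marginalLogLik _ _ _ hlam ha (hS lam ▸ hpos.ne')]
  simp only [mul_assoc]

theorem estimating_equation_is_scaled_score (n : ℕ) (hn : 1 ≤ n)
    (η : Fin n → ℝ) (hη : ∀ i, 0 < η i) (x : Fin n → ℝ)
    (ℓ : ℝ → ℝ)
    (hℓ : ∀ lam : ℝ, ℓ lam =
      -((n:ℝ)/2) * Real.log (∑ i, x i ^ 2 * (lam * (n:ℝ) * η i) / (1 + lam * (n:ℝ) * η i)) +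
      (1/2) * ∑ i, Real.log ((lam * (n:ℝ) * η i) / (1 + lam * (n:ℝ) * η i)))
    (T : ℝ → ℝ)
    (hT : ∀ lam : ℝ, T lam =
      (1/(n:ℝ)) * ∑ i, x i ^ 2 * (lam * (n:ℝ) * η i) / (1 + lam * (n:ℝ) * η i) ^ 2 -
      (1/(n:ℝ)^2) * (∑ i, x i ^ 2 * (lam * (n:ℝ) * η i) / (1 + lam * (n:ℝ) * η i)) *
        (∑ i, 1 / (1 + lam * (n:ℝ) * η i)))
    (lam : ℝ) (hlam : 0 < lam)
    (hpos : 0 < ∑ i, x i ^ 2 * (lam * (n:ℝ) * η i) / (1 + lam * (n:ℝ) * η i)) :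
    T lam = -(2 * lam / (n:ℝ)^2) *
      (∑ i, x i ^ 2 * (lam * (n:ℝ) * η i) / (1 + lam * (n:ℝ) * η i)) * deriv ℓ lam :=
  estimating_equation_is_scaled_score_general n η hη x ℓ hℓ T hT lam hlam hpos
end
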